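/- If each D_i is an irreducible nonnegative n×n matrix and M is the closed redistribution matrix with all coefficients c_j^{i,ℓ} strictly positive, then the multiplex operator 𝔇 = MD (with D = diag(D_1,...,D_k)) is irreducible. -/
import Mathlib


/-- A nonnegative square matrix `A` is irreducible if for every pair of indices
`(a, b)` some power of `A` has a strictly positive `(a, b)` entry. -/
def MatIrreducible {m : Type*} [Fintype m] [DecidableEq m]
    (A : Matrix m m ℝ) : Prop :=
  ∀ a b, ∃ t : ℕ, 1 ≤ t ∧ 0 < (A ^ t) a b

lemma pow_entry_nonneg {m : Type*} [Fintype m] [DecidableEq m]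
    (A : Matrix m m ℝ) (h : ∀ a b, 0 ≤ A a b) (t : ℕ) :
    ∀ a b, 0 ≤ (A ^ t) a b := by
  induction t with
  | zero => intro a b; simp [Matrix.one_apply]; split <;> norm_num
  | succ t ih =>
      intro a b
      rw [pow_succ, Matrix.mul_apply]
      exact Finset.sum_nonneg fun x _ => mul_nonneg (ih a x) (h x b)

/-- If each layer matrix `D i` is nonnegative and irreducible and `M` is the closed
redistribution matrix with all coefficients `c j i ℓ` strictly positive (the
`(i, ℓ)` block of `M` being `diag (c 1 i ℓ, …, c n i ℓ)`, with `∑ i, c j i ℓ = 1`),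
then the multiplex operator `𝔇 = M * diag(D₁, …, D_k)` is irreducible. -/
theorem stmt_18 {n k : ℕ} (D : Fin k → Matrix (Fin n) (Fin n) ℝ)
    (hDpos : ∀ i, ∀ a b, 0 ≤ D i a b)
    (hDirr : ∀ i, MatIrreducible (D i))
    (c : Fin n → Fin k → Fin k → ℝ)
    (hc : ∀ j i ℓ, 0 < c j i ℓ) (hsum : ∀ j ℓ, ∑ i, c j i ℓ = 1) :
    MatIrreducible
      ((Matrix.of fun p q : Fin k × Fin n =>
          if p.2 = q.2 then c p.2 p.1 q.1 else 0) *
        Matrix.of fun p q : Fin k × Fin n =>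
          if p.1 = q.1 then D p.1 p.2 q.2 else 0) := by
  set 𝔇 : Matrix (Fin k × Fin n) (Fin k × Fin n) ℝ :=
    (Matrix.of fun p q : Fin k × Fin n =>
        if p.2 = q.2 then c p.2 p.1 q.1 else 0) *
      Matrix.of fun p q : Fin k × Fin n =>
        if p.1 = q.1 then D p.1 p.2 q.2 else 0 with h𝔇
  -- the entries of 𝔇
  have hentry : ∀ p q : Fin k × Fin n, 𝔇 p q = c p.2 p.1 q.1 * D q.1 p.2 q.2 := by
    intro p q
    rw [h𝔇, Matrix.mul_apply, Fintype.sum_prod_type]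
    simp [Matrix.of_apply, ite_mul, mul_ite, Finset.sum_ite_eq, Finset.sum_ite_eq',
      eq_comm]
  have h𝔇nonneg : ∀ p q, 0 ≤ 𝔇 p q := by
    intro p q
    rw [hentry]
    exact mul_nonneg (hc _ _ _).le (hDpos _ _ _)
  -- main induction
  have main : ∀ t : ℕ, 1 ≤ t → ∀ (i : Fin k) (a : Fin n) (ℓ : Fin k) (b : Fin n),
      0 < (D ℓ ^ t) a b → 0 < (𝔇 ^ t) (i, a) (ℓ, b) := by
    intro t ht
    induction t, ht using Nat.le_induction with
    | base =>
        intro i a ℓ b hD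
        rw [pow_one] at hD ⊢
        rw [hentry]
        exact mul_pos (hc _ _ _) hD
    | succ t ht ih =>
        intro i a ℓ b hD
        rw [pow_succ'] at hD
        rw [Matrix.mul_apply] at hD
        -- find a positive term
        have : ∃ x : Fin n, 0 < D ℓ a x * (D ℓ ^ t) x b := by
          by_contra hcon
          push_neg at hcon
          have : (∑ x, D ℓ a x * (D ℓ ^ t) x b) ≤ 0 :=
            Finset.sum_nonpos fun x _ => hcon x
          linarith
        obtain ⟨x, hx⟩ := this
        have hx1 : 0 < D ℓ a x := by
          rcases (mul_pos_iff.mp hx) with ⟨h1, _⟩ | ⟨h1, _⟩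
          · exact h1
          · exact absurd h1 (not_lt.mpr (hDpos _ _ _))
        have hx2 : 0 < (D ℓ ^ t) x b := by
          rcases (mul_pos_iff.mp hx) with ⟨_, h2⟩ | ⟨h2, _⟩
          · exact h2
          · exact absurd h2 (not_lt.mpr (hDpos _ _ _))
        rw [pow_succ', Matrix.mul_apply]
        apply Finset.sum_pos'
        · intro q _
          exact mul_nonneg (h𝔇nonneg _ _) (pow_entry_nonneg 𝔇 h𝔇nonneg t _ _)
        · refine ⟨(ℓ, x), Finset.mem_univ _, ?_⟩
          apply mul_pos
          · rw [hentry]; exact mul_pos (hc _ _ _) hx1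
          · exact ih ℓ x ℓ b hx2
  rintro ⟨i, a⟩ ⟨ℓ, b⟩
  obtain ⟨t, ht, hpos⟩ := hDirr ℓ a b
  exact ⟨t, ht, main t ht i a ℓ b hpos⟩
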